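/- arXiv:math/0501126 — 2 statements merged into one kernel-verified Lean document; each statement's English description precedes it below -/
import Mathlib

section
/- Let f : ℝ → ℂ² be a bounded, twice continuously differentiable solution of ℋf = f that does not belong to L²(ℝ, ℂ²). Then there exist constants C₊, C₋ ∈ ℂ, not both zero, and M > 0 such that |f(x) − C₊·(1,0)| ≤ M e^(−γx) for all x ≥ 0 and |f(x) − C₋·(1,0)| ≤ M e^(γx) for all x ≤ 0. Analogously, any bounded, twice continuously differentiable solution of ℋf = −f not in L² satisfies the same asymptotics with the vector (0,1) in place of (1,0). -/
section Aux12
open Real MeasureTheory Set Filter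

theorem cd2 {f : ℝ → ℂ} (hf : ContDiff ℝ 2 f) :
    Differentiable ℝ f ∧ Differentiable ℝ (deriv f) ∧ Continuous (deriv (deriv f)) := by
  have h1 : ContDiff ℝ ((1 : ℕ) + 1) f := by exact_mod_cast hf
  rw [contDiff_succ_iff_deriv] at h1
  obtain ⟨hd, -, h2⟩ := h1
  have h2' : ContDiff ℝ 1 (deriv f) := by exact_mod_cast h2
  rw [contDiff_one_iff_deriv] at h2'
  exact ⟨hd, h2'.1, h2'.2⟩

theorem expIoi (γ : ℝ) (hγ : 0 < γ) (t : ℝ) : ∫ s in Ioi t, exp (-γ * s) = exp (-γ * t) / γ := by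
  have h : ∀ x ∈ Ici t, HasDerivAt (fun s => -(exp (-γ * s) / γ)) (exp (-γ * x)) x := by
    intro x _
    have h0 : HasDerivAt (fun s : ℝ => -γ * s) (-γ) x := by
      simpa using (hasDerivAt_id x).const_mul (-γ)
    have := ((h0.exp).div_const γ).neg
    convert this using 1
    · rfl
    · rfl
    · rfl
    · field_simp
  have hint : IntegrableOn (fun s => exp (-γ * s)) (Ioi t) := exp_neg_integrableOn_Ioi t hγ
  have htend : Tendsto (fun s => -(exp (-γ * s) / γ)) atTop (nhds 0) := by
    have h1 : Tendsto (fun s : ℝ => -γ * s) atTop atBot :=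
      Tendsto.const_mul_atTop_of_neg (neg_neg_iff_pos.mpr hγ) tendsto_id
    have := (Real.tendsto_exp_atBot.comp h1).div_const γ
    simpa using this.neg
  have := integral_Ioi_of_hasDerivAt_of_tendsto' h hint htend
  rw [this]; ring


theorem expIntOn {γ : ℝ} (hγ : 0 < γ) (C t : ℝ) :
    IntegrableOn (fun s => C * exp (-γ * s)) (Ioi t) :=
  (exp_neg_integrableOn_Ioi t hγ).const_mul C

theorem tail_repr {q h : ℝ → ℂ} (hq : ∀ x, HasDerivAt q (h x) x) (hcont : Continuous h)
    {C γ : ℝ} (hγ : 0 < γ) (hb : ∀ x, 0 ≤ x → ‖h x‖ ≤ C * exp (-γ * x)) :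
    ∃ L : ℂ, ∀ x, 0 ≤ x → q x - L = -∫ t in Ioi x, h t := by
  have hInt : ∀ x : ℝ, 0 ≤ x → IntegrableOn h (Ioi x) := by
    intro x hx
    apply Integrable.mono (expIntOn hγ C x) (hcont.aestronglyMeasurable.restrict)
    refine (ae_restrict_iff' measurableSet_Ioi).2 (ae_of_all _ fun t ht => ?_)
    refine (hb t (hx.trans ht.le)).trans ?_
    exact le_abs_self _
  refine ⟨q 0 + ∫ t in Ioi 0, h t, fun x hx => ?_⟩
  have hftc : ∫ t in (0:ℝ)..x, h t = q x - q 0 :=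
    intervalIntegral.integral_eq_sub_of_hasDerivAt (fun t _ => hq t)
      (hcont.intervalIntegrable 0 x)
  have hsplit : ∫ t in Ioi (0:ℝ), h t = (∫ t in Ioc 0 x, h t) + ∫ t in Ioi x, h t := by
    rw [← setIntegral_union (Ioc_disjoint_Ioi le_rfl) measurableSet_Ioi
      ((hInt 0 le_rfl).mono_set Ioc_subset_Ioi_self) (hInt x hx), Ioc_union_Ioi_eq_Ioi hx]
  rw [intervalIntegral.integral_of_le hx] at hftc
  rw [hsplit]
  rw [hftc]
  ring

theorem tail_bound {q h : ℝ → ℂ} (hq : ∀ x, HasDerivAt q (h x) x) (hcont : Continuous h)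
    {C γ : ℝ} (hγ : 0 < γ) (hb : ∀ x, 0 ≤ x → ‖h x‖ ≤ C * exp (-γ * x)) :
    ∃ L : ℂ, ∀ x, 0 ≤ x → ‖q x - L‖ ≤ C / γ * exp (-γ * x) := by
  obtain ⟨L, hL⟩ := tail_repr hq hcont hγ hb
  refine ⟨L, fun x hx => ?_⟩
  rw [hL x hx, norm_neg]
  calc ‖∫ t in Ioi x, h t‖ ≤ ∫ t in Ioi x, C * exp (-γ * t) := by
        rw [show (fun t => C * exp (-γ * t)) = fun t => C * exp (-γ * t) from rfl]
        apply norm_integral_le_of_norm_le (expIntOn hγ C x)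
        refine (ae_restrict_iff' measurableSet_Ioi).2 (ae_of_all _ fun t ht => ?_)
        exact hb t (hx.trans ht.le)
    _ = C / γ * exp (-γ * x) := by
        rw [MeasureTheory.integral_const_mul, expIoi γ hγ x]; ring




theorem no_pos_max {φ ψ : ℝ → ℝ} (hφ : ∀ x, HasDerivAt φ (ψ x) x) {x₀ c : ℝ}
    (hψ : HasDerivAt ψ c x₀) (hmax : IsLocalMax φ x₀) (hc : 0 < c) : False := by
  have hψ0 : ψ x₀ = 0 := by
    have h1 := hmax.deriv_eq_zero
    rwa [(hφ x₀).deriv] at h1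
  have hslope := hasDerivAt_iff_tendsto_slope.mp hψ
  have hev : ∀ᶠ y in nhdsWithin x₀ {x₀}ᶜ, 0 < slope ψ x₀ y :=
    hslope.eventually (eventually_gt_nhds hc)
  have hev2 : ∀ᶠ y in nhdsWithin x₀ (Ioi x₀), 0 < ψ y := by
    have h3 : nhdsWithin x₀ (Ioi x₀) ≤ nhdsWithin x₀ {x₀}ᶜ :=
      nhdsWithin_mono x₀ (fun y hy => ne_of_gt hy)
    filter_upwards [h3 hev, self_mem_nhdsWithin] with y hy hy'
    rw [slope_def_field] at hy
    have hd : 0 < y - x₀ := sub_pos.mpr hy'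
    rw [hψ0, sub_zero] at hy
    have := mul_pos hy hd
    rw [div_mul_cancel₀ _ (ne_of_gt hd)] at this
    exact this
  have hev3 : ∀ᶠ y in nhdsWithin x₀ (Ioi x₀), φ y ≤ φ x₀ :=
    mem_nhdsWithin_of_mem_nhds hmax
  obtain ⟨u, hu, hsub⟩ := mem_nhdsGT_iff_exists_Ioo_subset.mp (hev2.and hev3)
  set y₀ := (x₀ + u) / 2 with hy₀
  have hy₀mem : y₀ ∈ Ioo x₀ u := ⟨by simp [hy₀]; linarith [hu.out], by simp [hy₀]; linarith [hu.out]⟩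
  have hmono : StrictMonoOn φ (Icc x₀ y₀) := by
    apply strictMonoOn_of_deriv_pos (convex_Icc _ _)
    · exact Continuous.continuousOn (continuous_iff_continuousAt.2 fun x => (hφ x).continuousAt)
    · intro x hx
      rw [interior_Icc] at hx
      rw [(hφ x).deriv]
      exact (hsub ⟨hx.1, hx.2.trans hy₀mem.2⟩).1
  have h4 := hmono (left_mem_Icc.mpr hy₀mem.1.le) (right_mem_Icc.mpr hy₀mem.1.le) hy₀mem.1
  exact absurd (hsub hy₀mem).2 (not_le.mpr h4)


theorem comparison {g g' g'' : ℝ → ℝ}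
    (hg1 : ∀ x, HasDerivAt g (g' x) x) (hg2 : ∀ x, HasDerivAt g' (g'' x) x)
    {B C K γ : ℝ} (hγ : 0 < γ) (hγ1 : γ ≤ 1) (hB : 0 ≤ B) (hK : 0 ≤ K)
    (hgB : ∀ x, 0 ≤ x → g x ≤ B)
    (hineq : ∀ x, 0 ≤ x → 2 * g x - C * exp (-γ * x) ≤ g'' x)
    (hCK : C ≤ K) (hg0 : g 0 ≤ K) :
    ∀ x, 0 ≤ x → g x ≤ K * exp (-γ * x) := by
  set h : ℝ → ℝ := fun x => g x - K * exp (-γ * x) with hh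
  set h' : ℝ → ℝ := fun x => g' x + K * γ * exp (-γ * x) with hh'
  set h'' : ℝ → ℝ := fun x => g'' x - K * γ ^ 2 * exp (-γ * x) with hh''
  have hexp : ∀ x : ℝ, HasDerivAt (fun s => exp (-γ * s)) (-γ * exp (-γ * x)) x := by
    intro x
    have h0 : HasDerivAt (fun s : ℝ => -γ * s) (-γ) x := by
      simpa using (hasDerivAt_id x).const_mul (-γ)
    simpa [mul_comm] using h0.exp
  have hd1 : ∀ x, HasDerivAt h (h' x) x := by
    intro x
    have hthis := (hg1 x).sub ((hexp x).const_mul K)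
    have he : h' x = g' x - K * (-γ * exp (-γ * x)) := by
      show g' x + K * γ * exp (-γ * x) = _
      ring
    rw [he]
    exact hthis
  have hd2 : ∀ x, HasDerivAt h' (h'' x) x := by
    intro x
    have hthis := (hg2 x).add ((hexp x).const_mul (K * γ))
    have he : h'' x = g'' x + K * γ * (-γ * exp (-γ * x)) := by
      show g'' x - K * γ ^ 2 * exp (-γ * x) = _
      ring
    rw [he]
    exact hthis
  have hhineq : ∀ x, 0 ≤ x → 2 * h x ≤ h'' x := by
    intro x hx
    have h1 := hineq x hx
    have h2 : (0:ℝ) < exp (-γ * x) := exp_pos _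
    show 2 * (g x - K * exp (-γ * x)) ≤ g'' x - K * γ ^ 2 * exp (-γ * x)
    nlinarith [mul_nonneg (mul_nonneg hK (show (0:ℝ) ≤ 1 - γ ^ 2 by nlinarith)) h2.le,
      mul_nonneg (show (0:ℝ) ≤ K - C by linarith) h2.le]
  have hh0 : h 0 ≤ 0 := by
    show g 0 - K * exp (-γ * 0) ≤ 0
    simp only [mul_zero, neg_zero, Real.exp_zero, mul_one]
    linarith
  have hhB : ∀ x, 0 ≤ x → h x ≤ B := by
    intro x hx
    have := mul_nonneg hK (exp_pos (-γ * x)).le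
    have := hgB x hx
    show g x - K * exp (-γ * x) ≤ B
    linarith
  clear_value h h' h''
  -- key claim : h ≤ 0 on [0, ∞)
  have key : ∀ x₀, 0 ≤ x₀ → h x₀ ≤ 0 := by
    intro x₀ hx₀
    by_contra hpos
    push_neg at hpos
    set ε := h x₀ / (2 * exp x₀) with hε
    have hεpos : 0 < ε := div_pos hpos (by positivity)
    set φ : ℝ → ℝ := fun x => h x - ε * exp x with hφdef
    have hdφ1 : ∀ x, HasDerivAt φ (h' x - ε * exp x) x := by
      intro x
      exact (hd1 x).sub ((Real.hasDerivAt_exp x).const_mul ε)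
    have hdφ2 : ∀ x, HasDerivAt (fun x => h' x - ε * exp x) (h'' x - ε * exp x) x := by
      intro x
      exact (hd2 x).sub ((Real.hasDerivAt_exp x).const_mul ε)
    have hcφ : Continuous φ :=
      continuous_iff_continuousAt.2 fun x => (hdφ1 x).continuousAt
    have hφeq : ∀ y, φ y = h y - ε * exp y := fun y => by rw [hφdef]
    clear_value ε φ
    set R := max x₀ (Real.log ((B + 1) / ε)) + 1 with hRdef
    have hRx₀ : x₀ ≤ R := by
      have := le_max_left x₀ (Real.log ((B + 1) / ε))
      rw [hRdef]; linarith
    have hR0 : 0 ≤ R := le_trans hx₀ hRx₀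
    have hRB : B < ε * exp R := by
      have hlt : Real.log ((B + 1) / ε) < R := by
        have := le_max_right x₀ (Real.log ((B + 1) / ε))
        linarith
      have := Real.exp_log (show (0:ℝ) < (B + 1) / ε from by positivity)
      have h2 := Real.exp_lt_exp.mpr hlt
      rw [this] at h2
      have h3 := (div_lt_iff₀ hεpos).mp h2
      nlinarith
    obtain ⟨xs, hxsmem, hmax⟩ := isCompact_Icc.exists_isMaxOn
      (nonempty_Icc.mpr hR0) (hcφ.continuousOn (s := Icc 0 R))
    have hmax' : ∀ y ∈ Icc (0:ℝ) R, φ y ≤ φ xs := hmax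
    by_cases hneg : φ xs < 0
    · have h5 := hmax' x₀ ⟨hx₀, hRx₀⟩
      have h6 : h x₀ < ε * exp x₀ := by
        have h5' : φ x₀ < 0 := lt_of_le_of_lt h5 hneg
        rw [hφeq x₀] at h5'
        linarith
      have h7 : ε * exp x₀ = h x₀ / 2 := by
        rw [hε]
        have := (exp_pos x₀).ne'
        field_simp
      rw [h7] at h6
      linarith
    · push_neg at hneg
      have hxs0 : xs ≠ 0 := by
        intro he
        rw [he] at hneg
        rw [hφeq 0, Real.exp_zero, mul_one] at hneg
        linarith
      have hxsR : xs ≠ R := by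
        intro he
        rw [he] at hneg
        rw [hφeq R] at hneg
        have := hhB R hR0
        linarith
      have hxsIoo : xs ∈ Ioo (0:ℝ) R :=
        ⟨lt_of_le_of_ne hxsmem.1 (Ne.symm hxs0), lt_of_le_of_ne hxsmem.2 hxsR⟩
      have hloc : IsLocalMax φ xs := hmax.isLocalMax (Icc_mem_nhds hxsIoo.1 hxsIoo.2)
      refine no_pos_max hdφ1 (hdφ2 xs) hloc ?_
      have h8 := hhineq xs hxsmem.1
      have h9 : ε * exp xs ≤ h xs := by
        have h9' := hneg
        rw [hφeq xs] at h9'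
        linarith
      have h10 : (0:ℝ) < exp xs := exp_pos _
      nlinarith
  intro x hx
  have hx2 : g x - K * exp (-γ * x) ≤ 0 := by simpa [hh] using key x hx
  linarith


theorem expIntervalInt {γ : ℝ} (hγ : 0 < γ) (x : ℝ) :
    ∫ t in (0:ℝ)..x, exp (-γ * t) = (1 - exp (-γ * x)) / γ := by
  have h : ∀ t ∈ uIcc (0:ℝ) x, HasDerivAt (fun s => -(exp (-γ * s) / γ)) (exp (-γ * t)) t := by
    intro t _
    have h0 : HasDerivAt (fun s : ℝ => -γ * s) (-γ) t := by
      simpa using (hasDerivAt_id t).const_mul (-γ)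
    have := ((h0.exp).div_const γ).neg
    convert this using 1
    · rfl
    · rfl
    · rfl
    · field_simp
  have := intervalIntegral.integral_eq_sub_of_hasDerivAt h
    ((Real.continuous_exp.comp (continuous_const.mul continuous_id)).intervalIntegrable 0 x)
  rw [this]
  simp
  ring

theorem decay_of_bounded {p p' p'' : ℝ → ℂ}
    (hp1 : ∀ x, HasDerivAt p (p' x) x) (hp2 : ∀ x, HasDerivAt p' (p'' x) x)
    (hc : Continuous p'') {B C γ : ℝ} (hγ : 0 < γ)
    (hB : ∀ x, ‖p x‖ ≤ B) (hC2 : ∀ x, 0 ≤ x → ‖p'' x‖ ≤ C * exp (-γ * x)) :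
    ∃ K : ℂ, ∀ x, 0 ≤ x → ‖p x - K‖ ≤ C / γ / γ * exp (-γ * x) := by
  have hcp' : Continuous p' := by
    rw [continuous_iff_continuousAt]; exact fun x => (hp2 x).continuousAt
  obtain ⟨L, hL⟩ := tail_bound hp2 hc hγ hC2
  have hCpos : 0 ≤ C := by
    have h0 := (norm_nonneg (p'' 0)).trans (hC2 0 le_rfl)
    simpa using h0
  have hBpos : 0 ≤ B := (norm_nonneg (p 0)).trans (hB 0)
  have hL0 : L = 0 := by
    by_contra hne
    have hnorm : 0 < ‖L‖ := norm_pos_iff.mpr hne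
    set R := (2 * B + C / γ / γ + 1) / ‖L‖ with hR
    have hRpos : 0 ≤ R := by positivity
    have h1 : ∫ t in (0:ℝ)..R, p' t = p R - p 0 :=
      intervalIntegral.integral_eq_sub_of_hasDerivAt (fun t _ => hp1 t)
        (hcp'.intervalIntegrable 0 R)
    have hint : ∫ t in (0:ℝ)..R, (p' t - L) = (p R - p 0) - R • L := by
      rw [intervalIntegral.integral_sub (hcp'.intervalIntegrable 0 R)
        intervalIntegrable_const, h1, intervalIntegral.integral_const]
      simp
    have hbound : ‖∫ t in (0:ℝ)..R, (p' t - L)‖ ≤ C / γ / γ := by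
      have hb2 : ‖∫ t in (0:ℝ)..R, (p' t - L)‖ ≤ |∫ t in (0:ℝ)..R, C / γ * exp (-γ * t)| := by
        apply intervalIntegral.norm_integral_le_abs_of_norm_le
        · rw [uIoc_of_le hRpos]
          refine (ae_restrict_iff' measurableSet_Ioc).2 (ae_of_all _ fun t ht => hL t ht.1.le)
        · exact (by fun_prop : Continuous fun t : ℝ => C / γ * exp (-γ * t)).intervalIntegrable 0 R
      refine hb2.trans ?_
      rw [intervalIntegral.integral_const_mul, expIntervalInt hγ]
      have he1 : exp (-γ * R) ≤ 1 := exp_le_one_iff.mpr (by nlinarith)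
      have he2 : (0:ℝ) < exp (-γ * R) := exp_pos _
      have hnn : 0 ≤ C / γ * ((1 - exp (-γ * R)) / γ) :=
        mul_nonneg (div_nonneg hCpos hγ.le) (div_nonneg (by linarith) hγ.le)
      rw [abs_of_nonneg hnn, div_div, div_mul_div_comm, div_le_div_iff_of_pos_right (mul_pos hγ hγ)]
      nlinarith [mul_nonneg hCpos he2.le]
    have hfin : R * ‖L‖ ≤ 2 * B + C / γ / γ := by
      have : ‖R • L‖ ≤ ‖p R‖ + ‖p 0‖ + C / γ / γ := by
        have h2 : R • L = ((p R - p 0) - ∫ t in (0:ℝ)..R, (p' t - L)) := by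
          rw [hint]; ring
        rw [h2]
        calc ‖(p R - p 0) - ∫ t in (0:ℝ)..R, (p' t - L)‖
            ≤ ‖p R - p 0‖ + ‖∫ t in (0:ℝ)..R, (p' t - L)‖ := norm_sub_le _ _
          _ ≤ (‖p R‖ + ‖p 0‖) + C / γ / γ := add_le_add (norm_sub_le _ _) hbound
      rw [norm_smul, Real.norm_eq_abs, abs_of_nonneg hRpos] at this
      linarith [hB R, hB 0]
    rw [hR, div_mul_cancel₀ _ (ne_of_gt hnorm)] at hfin
    linarith
  have hp'b : ∀ x, 0 ≤ x → ‖p' x‖ ≤ C / γ * exp (-γ * x) := by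
    intro x hx
    have := hL x hx
    rwa [hL0, sub_zero] at this
  exact tail_bound hp1 hcp' hγ hp'b


theorem w_decay {w w' w'' : ℝ → ℂ}
    (hw1 : ∀ x, HasDerivAt w (w' x) x) (hw2 : ∀ x, HasDerivAt w' (w'' x) x)
    {B C γ : ℝ} (hγ : 0 < γ) (hγ1 : γ ≤ 1) (hB : 0 ≤ B)
    (hwB : ∀ x, ‖w x‖ ≤ B)
    (hE : ∀ x, 0 ≤ x → ‖w'' x - 2 * w x‖ ≤ C * exp (-γ * x)) :
    ∀ x, 0 ≤ x → ‖w x‖ ≤ 2 * max B C * exp (-γ * x) := by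
  have hC0 : 0 ≤ C := by
    have := (norm_nonneg (w'' 0 - 2 * w 0)).trans (hE 0 le_rfl)
    simpa using this
  set K := max B C with hK
  have hKB : B ≤ K := le_max_left _ _
  have hKC : C ≤ K := le_max_right _ _
  have hK0 : 0 ≤ K := hC0.trans hKC
  -- generic real-part estimate
  have main : ∀ g g' g'' : ℝ → ℝ, (∀ x, HasDerivAt g (g' x) x) → (∀ x, HasDerivAt g' (g'' x) x) →
      (∀ x, |g x| ≤ B) → (∀ x, 0 ≤ x → |g'' x - 2 * g x| ≤ C * exp (-γ * x)) →
      ∀ x, 0 ≤ x → |g x| ≤ K * exp (-γ * x) := by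
    intro g g' g'' hg1 hg2 hgB hgE x hx
    have h1 : g x ≤ K * exp (-γ * x) := by
      apply comparison hg1 hg2 hγ hγ1 hB hK0 (fun y hy => (le_abs_self _).trans (hgB y)) ?_ hKC
        ((le_abs_self _).trans ((hgB 0).trans hKB))
      · exact hx
      · intro y hy
        have := (abs_le.mp (hgE y hy)).1
        linarith
    have h2 : -g x ≤ K * exp (-γ * x) := by
      apply comparison (g := fun y => -g y) (fun y => (hg1 y).neg) (fun y => (hg2 y).neg)
        hγ hγ1 hB hK0 (fun y hy => (neg_le_abs _).trans (hgB y)) ?_ hKC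
        ((neg_le_abs _).trans ((hgB 0).trans hKB))
      · exact hx
      · intro y hy
        have := (abs_le.mp (hgE y hy)).2
        linarith
    exact abs_le.mpr ⟨by linarith, h1⟩
  -- apply to re and im
  intro x hx
  set r : ℝ → ℝ := fun y => (w y).re with hr
  set i : ℝ → ℝ := fun y => (w y).im with hi
  have hdr1 : ∀ y, HasDerivAt r ((w' y).re) y := fun y =>
    Complex.reCLM.hasFDerivAt.comp_hasDerivAt y (hw1 y)
  have hdr2 : ∀ y, HasDerivAt (fun y => (w' y).re) ((w'' y).re) y := fun y =>
    Complex.reCLM.hasFDerivAt.comp_hasDerivAt y (hw2 y)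
  have hdi1 : ∀ y, HasDerivAt i ((w' y).im) y := fun y =>
    Complex.imCLM.hasFDerivAt.comp_hasDerivAt y (hw1 y)
  have hdi2 : ∀ y, HasDerivAt (fun y => (w' y).im) ((w'' y).im) y := fun y =>
    Complex.imCLM.hasFDerivAt.comp_hasDerivAt y (hw2 y)
  have hre := main r _ _ hdr1 hdr2
    (fun y => (Complex.abs_re_le_norm (w y)).trans (hwB y))
    (fun y hy => by
      have h3 : (w'' y).re - 2 * r y = (w'' y - 2 * w y).re := by
        simp [hr, Complex.sub_re, Complex.mul_re]
      rw [h3]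
      exact (Complex.abs_re_le_norm _).trans (hE y hy)) x hx
  have him := main i _ _ hdi1 hdi2
    (fun y => (Complex.abs_im_le_norm (w y)).trans (hwB y))
    (fun y hy => by
      have h3 : (w'' y).im - 2 * i y = (w'' y - 2 * w y).im := by
        simp [hi, Complex.sub_im, Complex.mul_im]
      rw [h3]
      exact (Complex.abs_im_le_norm _).trans (hE y hy)) x hx
  calc ‖w x‖ ≤ |(w x).re| + |(w x).im| := Complex.norm_le_abs_re_add_abs_im _
    _ ≤ K * exp (-γ * x) + K * exp (-γ * x) := add_le_add hre him
    _ = 2 * K * exp (-γ * x) := by ring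


theorem integrable_exp_abs {γ : ℝ} (hγ : 0 < γ) :
    Integrable (fun x : ℝ => exp (-γ * |x|)) := by
  have h1 : IntegrableOn (fun x : ℝ => exp (-γ * |x|)) (Ioi 0) := by
    apply (exp_neg_integrableOn_Ioi 0 hγ).congr_fun ?_ measurableSet_Ioi
    intro x hx
    simp only
    rw [abs_of_pos hx]
  have h2 : IntegrableOn (fun x : ℝ => exp (-γ * |x|)) (Iic 0) := by
    apply (integrableOn_exp_mul_Iic hγ 0).congr_fun ?_ measurableSet_Iic
    intro x hx
    simp only
    rw [abs_of_nonpos (mem_Iic.mp hx)]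
    ring_nf
  have := h2.union h1
  rwa [Iic_union_Ioi, integrableOn_univ] at this

theorem exp_decay_memL2 {g : ℝ → ℂ × ℂ} (hg : Continuous g) {M γ : ℝ} (hγ : 0 < γ)
    (hb : ∀ x, ‖g x‖ ≤ M * exp (-γ * |x|)) : MemLp g 2 volume := by
  rw [memLp_two_iff_integrable_sq_norm hg.aestronglyMeasurable]
  have hM : 0 ≤ M := by
    have := (norm_nonneg (g 0)).trans (hb 0)
    nlinarith [exp_pos (-γ * |(0:ℝ)|)]
  apply Integrable.mono' (g := fun x => M ^ 2 * exp (-(2 * γ) * |x|))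
    ((integrable_exp_abs (by linarith : (0:ℝ) < 2 * γ)).const_mul _)
    ((hg.norm.pow 2).aestronglyMeasurable)
  refine ae_of_all _ fun x => ?_
  rw [Real.norm_eq_abs, Pi.pow_apply, abs_of_nonneg (by positivity : (0:ℝ) ≤ ‖g x‖ ^ 2)]
  have h1 := hb x
  have h2 : (M * exp (-γ * |x|)) ^ 2 = M ^ 2 * exp (-(2 * γ) * |x|) := by
    rw [mul_pow, ← Real.exp_nat_mul]
    ring_nf
  calc ‖g x‖ ^ 2 ≤ (M * exp (-γ * |x|)) ^ 2 := by
        apply pow_le_pow_left₀ (norm_nonneg _) h1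
    _ = M ^ 2 * exp (-(2 * γ) * |x|) := h2


theorem master {u u' u'' w w' w'' : ℝ → ℂ}
    (hu1 : ∀ x, HasDerivAt u (u' x) x) (hu2 : ∀ x, HasDerivAt u' (u'' x) x)
    (hw1 : ∀ x, HasDerivAt w (w' x) x) (hw2 : ∀ x, HasDerivAt w' (w'' x) x)
    (hcu'' : Continuous u'') {B C γ : ℝ} (hγ : 0 < γ) (hγ1 : γ ≤ 1)
    (huB : ∀ x, ‖u x‖ ≤ B) (hwB : ∀ x, ‖w x‖ ≤ B)
    (hus : ∀ x, ‖u'' x‖ ≤ C * exp (-γ * |x|))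
    (hws : ∀ x, ‖w'' x - 2 * w x‖ ≤ C * exp (-γ * |x|))
    (hns : ¬ MemLp (fun x => (u x, w x)) 2 volume) :
    ∃ Cp Cm : ℂ, ∃ M : ℝ, 0 < M ∧ ¬(Cp = 0 ∧ Cm = 0) ∧
      (∀ x, 0 ≤ x → ‖u x - Cp‖ ≤ M * exp (-γ * x) ∧ ‖w x‖ ≤ M * exp (-γ * x)) ∧
      (∀ x, x ≤ 0 → ‖u x - Cm‖ ≤ M * exp (γ * x) ∧ ‖w x‖ ≤ M * exp (γ * x)) := by
  have hB0 : 0 ≤ B := (norm_nonneg (u 0)).trans (huB 0)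
  have hC0 : 0 ≤ C := by
    have := (norm_nonneg (u'' 0)).trans (hus 0)
    simpa using this
  -- positive side for u
  obtain ⟨Cp, hCp⟩ := decay_of_bounded hu1 hu2 hcu'' hγ huB
    (fun x hx => by simpa [abs_of_nonneg hx] using hus x)
  -- positive side for w
  have hwpos := w_decay hw1 hw2 hγ hγ1 hB0 hwB
    (fun x hx => by simpa [abs_of_nonneg hx] using hws x)
  -- reflections
  have hru1 : ∀ x : ℝ, HasDerivAt (fun y => u (-y)) (-u' (-x)) x := by
    intro x
    have := HasDerivAt.scomp (g₁ := u) (h := fun y : ℝ => -y) x (hu1 (-x)) (hasDerivAt_neg x)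
    simpa [Function.comp_def] using this
  have hru2 : ∀ x : ℝ, HasDerivAt (fun y => -u' (-y)) (u'' (-x)) x := by
    intro x
    have := (HasDerivAt.scomp (g₁ := u') (h := fun y : ℝ => -y) x (hu2 (-x)) (hasDerivAt_neg x)).neg
    simpa [Function.comp_def, Pi.neg_def] using this
  have hrw1 : ∀ x : ℝ, HasDerivAt (fun y => w (-y)) (-w' (-x)) x := by
    intro x
    have := HasDerivAt.scomp (g₁ := w) (h := fun y : ℝ => -y) x (hw1 (-x)) (hasDerivAt_neg x)
    simpa [Function.comp_def] using this
  have hrw2 : ∀ x : ℝ, HasDerivAt (fun y => -w' (-y)) (w'' (-x)) x := by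
    intro x
    have := (HasDerivAt.scomp (g₁ := w') (h := fun y : ℝ => -y) x (hw2 (-x)) (hasDerivAt_neg x)).neg
    simpa [Function.comp_def, Pi.neg_def] using this
  obtain ⟨Cm, hCm⟩ := decay_of_bounded hru1 hru2 (hcu''.comp continuous_neg) hγ
    (fun x => huB (-x))
    (fun x hx => by simpa [abs_of_nonneg hx] using hus (-x))
  have hwneg := w_decay hrw1 hrw2 hγ hγ1 hB0 (fun x => hwB (-x))
    (fun x hx => by simpa [abs_of_nonneg hx] using hws (-x))
  set M := C / γ / γ + 2 * max B C + 1 with hM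
  have hmaxBC : (0:ℝ) ≤ max B C := le_trans hB0 (le_max_left _ _)
  have hMpos : 0 < M := by
    have : 0 ≤ C / γ / γ := by positivity
    rw [hM]; linarith
  have hMge1 : C / γ / γ ≤ M := by rw [hM]; linarith
  have hMge2 : 2 * max B C ≤ M := by
    have : 0 ≤ C / γ / γ := by positivity
    rw [hM]; linarith
  have hexppos : ∀ t : ℝ, 0 < exp t := fun t => exp_pos t
  have hpos : ∀ x, 0 ≤ x → ‖u x - Cp‖ ≤ M * exp (-γ * x) ∧ ‖w x‖ ≤ M * exp (-γ * x) := by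
    intro x hx
    constructor
    · exact (hCp x hx).trans (by nlinarith [hexppos (-γ * x)])
    · exact (hwpos x hx).trans (by nlinarith [hexppos (-γ * x)])
  have hneg : ∀ x, x ≤ 0 → ‖u x - Cm‖ ≤ M * exp (γ * x) ∧ ‖w x‖ ≤ M * exp (γ * x) := by
    intro x hx
    have hx' : 0 ≤ -x := by linarith
    constructor
    · have := hCm (-x) hx'
      rw [neg_neg] at this
      refine this.trans ?_
      rw [show -γ * -x = γ * x by ring]
      nlinarith [hexppos (γ * x)]
    · have := hwneg (-x) hx'
      rw [neg_neg] at this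
      refine this.trans ?_
      rw [show -γ * -x = γ * x by ring]
      nlinarith [hexppos (γ * x)]
  refine ⟨Cp, Cm, M, hMpos, ?_, hpos, hneg⟩
  rintro ⟨rfl, rfl⟩
  apply hns
  apply exp_decay_memL2 (g := fun x => (u x, w x))
    (Continuous.prodMk (continuous_iff_continuousAt.2 fun x => (hu1 x).continuousAt)
      (continuous_iff_continuousAt.2 fun x => (hw1 x).continuousAt)) hγ (M := M)
  intro x
  rw [Prod.norm_def]
  rcases le_or_gt 0 x with hx | hx
  · rw [abs_of_nonneg hx]
    have h1 := hpos x hx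
    rw [sub_zero] at h1
    exact max_le h1.1 h1.2
  · rw [abs_of_neg hx]
    have h1 := hneg x hx.le
    rw [sub_zero] at h1
    rw [show -γ * -x = γ * x by ring]
    exact max_le h1.1 h1.2

end Aux12
noncomputable section

open Real MeasureTheory

/-- The matrix Schrödinger operator `ℋ` acting on `f = (f₁, f₂) : ℝ → ℂ²`:
`ℋf = (−f₁'' + f₁ + V₁f₁ + V₂f₂, f₂'' − f₂ − V₂f₁ − V₁f₂)`. -/
def matH (V₁ V₂ : ℝ → ℝ) (f : ℝ → ℂ × ℂ) (x : ℝ) : ℂ × ℂ :=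
  (-(iteratedDeriv 2 (fun y => (f y).1) x) + (f x).1
      + (V₁ x : ℂ) * (f x).1 + (V₂ x : ℂ) * (f x).2,
    iteratedDeriv 2 (fun y => (f y).2) x - (f x).2
      - (V₂ x : ℂ) * (f x).1 - (V₁ x : ℂ) * (f x).2)

/-- `f` is a (classical, twice continuously differentiable) solution of `ℋf = z f`. -/
def IsSolution (V₁ V₂ : ℝ → ℝ) (z : ℂ) (f : ℝ → ℂ × ℂ) : Prop :=
  ContDiff ℝ 2 f ∧ ∀ x : ℝ, matH V₁ V₂ f x = z • f x

/-- The potentials `V₁, V₂` are smooth, even, and exponentially decaying with rate `γ ∈ (0,1)`,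
together with all derivatives. -/
def PotentialHyp (γ : ℝ) (V₁ V₂ : ℝ → ℝ) : Prop :=
  0 < γ ∧ γ < 1 ∧ ContDiff ℝ (⊤ : ℕ∞) V₁ ∧ ContDiff ℝ (⊤ : ℕ∞) V₂ ∧
    (∀ x, V₁ (-x) = V₁ x) ∧ (∀ x, V₂ (-x) = V₂ x) ∧
    ∀ k : ℕ, ∃ C : ℝ, ∀ x : ℝ,
      |iteratedDeriv k V₁ x| + |iteratedDeriv k V₂ x| ≤ C * Real.exp (-γ * |x|)

/-- `μ(λ) = √(λ² + 2)`. -/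
def mu (lam : ℝ) : ℝ := Real.sqrt (lam ^ 2 + 2)

theorem stmt_12 (γ : ℝ) (V₁ V₂ : ℝ → ℝ) (hV : PotentialHyp γ V₁ V₂) :
    (∀ f : ℝ → ℂ × ℂ, IsSolution V₁ V₂ 1 f →
      (∃ B : ℝ, ∀ x : ℝ, ‖f x‖ ≤ B) → ¬ MemLp f 2 volume →
      ∃ Cp Cm : ℂ, ∃ M : ℝ, 0 < M ∧ ¬(Cp = 0 ∧ Cm = 0) ∧
        (∀ x : ℝ, 0 ≤ x → ‖f x - Cp • ((1 : ℂ), (0 : ℂ))‖ ≤ M * Real.exp (-γ * x)) ∧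
        (∀ x : ℝ, x ≤ 0 → ‖f x - Cm • ((1 : ℂ), (0 : ℂ))‖ ≤ M * Real.exp (γ * x))) ∧
    (∀ f : ℝ → ℂ × ℂ, IsSolution V₁ V₂ (-1) f →
      (∃ B : ℝ, ∀ x : ℝ, ‖f x‖ ≤ B) → ¬ MemLp f 2 volume →
      ∃ Cp Cm : ℂ, ∃ M : ℝ, 0 < M ∧ ¬(Cp = 0 ∧ Cm = 0) ∧
        (∀ x : ℝ, 0 ≤ x → ‖f x - Cp • ((0 : ℂ), (1 : ℂ))‖ ≤ M * Real.exp (-γ * x)) ∧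
        (∀ x : ℝ, x ≤ 0 → ‖f x - Cm • ((0 : ℂ), (1 : ℂ))‖ ≤ M * Real.exp (γ * x))) := by
  obtain ⟨hγ0, hγ1, -, -, -, -, hdec⟩ := hV
  have hγle1 : γ ≤ 1 := le_of_lt hγ1
  obtain ⟨C₀, hC₀⟩ := hdec 0
  simp only [iteratedDeriv_zero] at hC₀
  have hC₀0 : 0 ≤ C₀ := by
    have h := hC₀ 0
    simp only [abs_zero, mul_zero, Real.exp_zero, mul_one] at h
    nlinarith [abs_nonneg (V₁ 0), abs_nonneg (V₂ 0)]
  constructor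
  · -- edge +1
    intro f hf hbd hns
    obtain ⟨B, hB⟩ := hbd
    have hB0 : 0 ≤ B := (norm_nonneg (f 0)).trans (hB 0)
    have hcd := hf.1
    have heq := hf.2
    obtain ⟨hud, hud1, hcu2⟩ := cd2 hcd.fst
    obtain ⟨hwd, hwd1, hcw2⟩ := cd2 hcd.snd
    have hu1 : ∀ x, HasDerivAt (fun y => (f y).1) (deriv (fun y => (f y).1) x) x :=
      fun x => (hud x).hasDerivAt
    have hu2 : ∀ x, HasDerivAt (deriv (fun y => (f y).1))
        (deriv (deriv (fun y => (f y).1)) x) x := fun x => (hud1 x).hasDerivAt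
    have hw1 : ∀ x, HasDerivAt (fun y => (f y).2) (deriv (fun y => (f y).2) x) x :=
      fun x => (hwd x).hasDerivAt
    have hw2 : ∀ x, HasDerivAt (deriv (fun y => (f y).2))
        (deriv (deriv (fun y => (f y).2)) x) x := fun x => (hwd1 x).hasDerivAt
    have hBu : ∀ x, ‖(f x).1‖ ≤ B := fun x => (norm_fst_le (f x)).trans (hB x)
    have hBw : ∀ x, ‖(f x).2‖ ≤ B := fun x => (norm_snd_le (f x)).trans (hB x)
    have hequ : ∀ x, deriv (deriv (fun y => (f y).1)) x
        = (V₁ x : ℂ) * (f x).1 + (V₂ x : ℂ) * (f x).2 := by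
      intro x
      have h1 := congrArg Prod.fst (heq x)
      simp only [matH, Prod.smul_fst, smul_eq_mul, one_mul] at h1
      rw [show (2:ℕ) = 1 + 1 from rfl, iteratedDeriv_succ, iteratedDeriv_one] at h1
      linear_combination -h1
    have heqw : ∀ x, deriv (deriv (fun y => (f y).2)) x - 2 * (f x).2
        = (V₂ x : ℂ) * (f x).1 + (V₁ x : ℂ) * (f x).2 := by
      intro x
      have h1 := congrArg Prod.snd (heq x)
      simp only [matH, Prod.smul_snd, smul_eq_mul, one_mul] at h1
      rw [show (2:ℕ) = 1 + 1 from rfl, iteratedDeriv_succ, iteratedDeriv_one] at h1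
      linear_combination h1
    have hbound : ∀ x : ℝ, ‖(V₁ x : ℂ) * (f x).1 + (V₂ x : ℂ) * (f x).2‖
        ≤ C₀ * B * Real.exp (-γ * |x|) ∧ ‖(V₂ x : ℂ) * (f x).1 + (V₁ x : ℂ) * (f x).2‖
        ≤ C₀ * B * Real.exp (-γ * |x|) := by
      intro x
      have key : ∀ a b : ℝ, |a| + |b| ≤ C₀ * Real.exp (-γ * |x|) →
          ‖(a : ℂ) * (f x).1 + (b : ℂ) * (f x).2‖ ≤ C₀ * B * Real.exp (-γ * |x|) := by
        intro a b hab
        calc ‖(a : ℂ) * (f x).1 + (b : ℂ) * (f x).2‖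
            ≤ ‖(a : ℂ) * (f x).1‖ + ‖(b : ℂ) * (f x).2‖ := norm_add_le _ _
          _ = |a| * ‖(f x).1‖ + |b| * ‖(f x).2‖ := by
              rw [norm_mul, norm_mul, Complex.norm_real, Complex.norm_real,
                Real.norm_eq_abs, Real.norm_eq_abs]
          _ ≤ |a| * B + |b| * B :=
              add_le_add (mul_le_mul_of_nonneg_left (hBu x) (abs_nonneg a))
                (mul_le_mul_of_nonneg_left (hBw x) (abs_nonneg b))
          _ = (|a| + |b|) * B := by ring
          _ ≤ (C₀ * Real.exp (-γ * |x|)) * B := mul_le_mul_of_nonneg_right hab hB0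
          _ = C₀ * B * Real.exp (-γ * |x|) := by ring
      exact ⟨key _ _ (hC₀ x), key _ _ (by rw [add_comm]; exact hC₀ x)⟩
    have hus : ∀ x, ‖deriv (deriv (fun y => (f y).1)) x‖ ≤ C₀ * B * Real.exp (-γ * |x|) := by
      intro x; rw [hequ x]; exact (hbound x).1
    have hws : ∀ x, ‖deriv (deriv (fun y => (f y).2)) x - 2 * (f x).2‖
        ≤ C₀ * B * Real.exp (-γ * |x|) := by
      intro x; rw [heqw x]; exact (hbound x).2
    have hns' : ¬ MemLp (fun x => ((f x).1, (f x).2)) 2 volume := by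
      intro hmem
      exact hns (by convert hmem using 2)
    obtain ⟨Cp, Cm, M, hM, hnz, hposi, hnegi⟩ :=
      master hu1 hu2 hw1 hw2 hcu2 hγ0 hγle1 hBu hBw hus hws hns'
    refine ⟨Cp, Cm, M, hM, hnz, ?_, ?_⟩
    · intro x hx
      have h := hposi x hx
      have hfx : f x - Cp • ((1:ℂ), (0:ℂ)) = ((f x).1 - Cp, (f x).2) := by
        rw [Prod.ext_iff]
        constructor <;> simp
      rw [hfx, Prod.norm_def]
      exact max_le h.1 h.2
    · intro x hx
      have h := hnegi x hx
      have hfx : f x - Cm • ((1:ℂ), (0:ℂ)) = ((f x).1 - Cm, (f x).2) := by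
        rw [Prod.ext_iff]
        constructor <;> simp
      rw [hfx, Prod.norm_def]
      exact max_le h.1 h.2
  · -- edge -1
    intro f hf hbd hns
    obtain ⟨B, hB⟩ := hbd
    have hB0 : 0 ≤ B := (norm_nonneg (f 0)).trans (hB 0)
    have hcd := hf.1
    have heq := hf.2
    obtain ⟨hud, hud1, hcu2⟩ := cd2 hcd.fst
    obtain ⟨hwd, hwd1, hcw2⟩ := cd2 hcd.snd
    have hu1 : ∀ x, HasDerivAt (fun y => (f y).1) (deriv (fun y => (f y).1) x) x :=
      fun x => (hud x).hasDerivAt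
    have hu2 : ∀ x, HasDerivAt (deriv (fun y => (f y).1))
        (deriv (deriv (fun y => (f y).1)) x) x := fun x => (hud1 x).hasDerivAt
    have hw1 : ∀ x, HasDerivAt (fun y => (f y).2) (deriv (fun y => (f y).2) x) x :=
      fun x => (hwd x).hasDerivAt
    have hw2 : ∀ x, HasDerivAt (deriv (fun y => (f y).2))
        (deriv (deriv (fun y => (f y).2)) x) x := fun x => (hwd1 x).hasDerivAt
    have hBu : ∀ x, ‖(f x).1‖ ≤ B := fun x => (norm_fst_le (f x)).trans (hB x)
    have hBw : ∀ x, ‖(f x).2‖ ≤ B := fun x => (norm_snd_le (f x)).trans (hB x)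
    have hequ : ∀ x, deriv (deriv (fun y => (f y).1)) x - 2 * (f x).1
        = (V₁ x : ℂ) * (f x).1 + (V₂ x : ℂ) * (f x).2 := by
      intro x
      have h1 := congrArg Prod.fst (heq x)
      simp only [matH, Prod.smul_fst, smul_eq_mul, neg_one_mul] at h1
      rw [show (2:ℕ) = 1 + 1 from rfl, iteratedDeriv_succ, iteratedDeriv_one] at h1
      linear_combination -h1
    have heqw : ∀ x, deriv (deriv (fun y => (f y).2)) x
        = (V₂ x : ℂ) * (f x).1 + (V₁ x : ℂ) * (f x).2 := by
      intro x
      have h1 := congrArg Prod.snd (heq x)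
      simp only [matH, Prod.smul_snd, smul_eq_mul, neg_one_mul] at h1
      rw [show (2:ℕ) = 1 + 1 from rfl, iteratedDeriv_succ, iteratedDeriv_one] at h1
      linear_combination h1
    have hbound : ∀ x : ℝ, ‖(V₁ x : ℂ) * (f x).1 + (V₂ x : ℂ) * (f x).2‖
        ≤ C₀ * B * Real.exp (-γ * |x|) ∧ ‖(V₂ x : ℂ) * (f x).1 + (V₁ x : ℂ) * (f x).2‖
        ≤ C₀ * B * Real.exp (-γ * |x|) := by
      intro x
      have key : ∀ a b : ℝ, |a| + |b| ≤ C₀ * Real.exp (-γ * |x|) →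
          ‖(a : ℂ) * (f x).1 + (b : ℂ) * (f x).2‖ ≤ C₀ * B * Real.exp (-γ * |x|) := by
        intro a b hab
        calc ‖(a : ℂ) * (f x).1 + (b : ℂ) * (f x).2‖
            ≤ ‖(a : ℂ) * (f x).1‖ + ‖(b : ℂ) * (f x).2‖ := norm_add_le _ _
          _ = |a| * ‖(f x).1‖ + |b| * ‖(f x).2‖ := by
              rw [norm_mul, norm_mul, Complex.norm_real, Complex.norm_real,
                Real.norm_eq_abs, Real.norm_eq_abs]
          _ ≤ |a| * B + |b| * B :=
              add_le_add (mul_le_mul_of_nonneg_left (hBu x) (abs_nonneg a))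
                (mul_le_mul_of_nonneg_left (hBw x) (abs_nonneg b))
          _ = (|a| + |b|) * B := by ring
          _ ≤ (C₀ * Real.exp (-γ * |x|)) * B := mul_le_mul_of_nonneg_right hab hB0
          _ = C₀ * B * Real.exp (-γ * |x|) := by ring
      exact ⟨key _ _ (hC₀ x), key _ _ (by rw [add_comm]; exact hC₀ x)⟩
    have hus : ∀ x, ‖deriv (deriv (fun y => (f y).2)) x‖ ≤ C₀ * B * Real.exp (-γ * |x|) := by
      intro x; rw [heqw x]; exact (hbound x).2
    have hws : ∀ x, ‖deriv (deriv (fun y => (f y).1)) x - 2 * (f x).1‖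
        ≤ C₀ * B * Real.exp (-γ * |x|) := by
      intro x; rw [hequ x]; exact (hbound x).1
    have hns' : ¬ MemLp (fun x => ((f x).2, (f x).1)) 2 volume := by
      intro hmem
      apply hns
      apply hmem.of_le hcd.continuous.aestronglyMeasurable
      refine Filter.Eventually.of_forall fun x => ?_
      rw [Prod.norm_def, Prod.norm_def]
      exact le_of_eq (max_comm _ _)
    obtain ⟨Cp, Cm, M, hM, hnz, hposi, hnegi⟩ :=
      master hw1 hw2 hu1 hu2 hcw2 hγ0 hγle1 hBw hBu hus hws hns'
    refine ⟨Cp, Cm, M, hM, hnz, ?_, ?_⟩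
    · intro x hx
      have h := hposi x hx
      have hfx : f x - Cp • ((0:ℂ), (1:ℂ)) = ((f x).1, (f x).2 - Cp) := by
        rw [Prod.ext_iff]
        constructor <;> simp
      rw [hfx, Prod.norm_def]
      exact max_le h.2 h.1
    · intro x hx
      have h := hnegi x hx
      have hfx : f x - Cm • ((0:ℂ), (1:ℂ)) = ((f x).1, (f x).2 - Cm) := by
        rw [Prod.ext_iff]
        constructor <;> simp
      rw [hfx, Prod.norm_def]
      exact max_le h.2 h.1
end
end

section
/- Let σ > 1 and let c be either σ+1 or (2σ+1)(σ+1). Consider the scalar Schrödinger operator L = −d²/dx² + 1 − c·cosh(σx)^(−2) on the line. Then: (i) for every E ∈ (0,1], every twice continuously differentiable f ∈ L²(ℝ) with Lf = Ef vanishes identically (L has no eigenvalues in (0,1]); and (ii) the threshold 1 is not a resonance: every bounded twice continuously differentiable solution of Lf = f vanishes identically. -/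
/-!
Writing `k = 1 - E`, the real and imaginary parts of `f` solve `u'' = (k - c sech² (σx)) u`, and
they are bounded: in case (i) because `u ∈ L²` and `u''` is a bounded multiple of `u`. The Darboux
transformation `u ↦ u' + a tanh (σx) u` maps solutions for `c = a (a + σ)` to solutions for
`c = a (a - σ)`; with `a = σ + 1` it turns `(2σ + 1)(σ + 1)` into `σ + 1`, and with `a = 1` it
turns `σ + 1` into `1 - σ`. For `c = 1 - σ` the coefficient `k + (σ - 1) sech² (σx)` is positive,
so the square of a bounded solution is convex and bounded, hence constant, and the solution
vanishes. A solution killed by the transformation solves a first-order equation that is compatible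
with the second-order one only if `k = a²`, which is excluded since `k < 1`.
-/

noncomputable section

open Real MeasureTheory

/-- The scalar Schrödinger operator `L = −d²/dx² + 1 − c·cosh(σx)^(−2)` applied to `f`. -/
def scalarL (σ c : ℝ) (f : ℝ → ℂ) (x : ℝ) : ℂ :=
  -(iteratedDeriv 2 f x) + f x - ((c / Real.cosh (σ * x) ^ 2 : ℝ) : ℂ) * f x

open Set
open scoped Interval

lemma hasDerivAt_tanh_mul (σ x : ℝ) :
    HasDerivAt (fun y => tanh (σ * y)) (σ * (1 - tanh (σ * x) ^ 2)) x := by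
  have hlin : HasDerivAt (fun y => σ * y) σ x := by simpa using (hasDerivAt_id x).const_mul σ
  have h := hlin.sinh.div hlin.cosh (cosh_pos (σ * x)).ne'
  simp only [tanh_eq_sinh_div_cosh]
  refine h.congr_deriv ?_
  field_simp

lemma one_sub_tanh_sq (x : ℝ) : 1 - tanh x ^ 2 = 1 / cosh x ^ 2 := by
  rw [tanh_eq_sinh_div_cosh]
  field_simp
  linear_combination cosh_sq_sub_sinh_sq x

-- `k - m sech² (σx)`: the equation `L f = E f` reads `f'' = poschlTeller σ (1 - E) c · f`.
def poschlTeller (σ k m x : ℝ) : ℝ := k - m * (1 - tanh (σ * x) ^ 2)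

lemma abs_poschlTeller_le (σ k m x : ℝ) : |poschlTeller σ k m x| ≤ |k| + |m| := by
  have h0 : 0 < 1 - tanh (σ * x) ^ 2 := by linarith [tanh_sq_lt_one (σ * x)]
  have h1 : 1 - tanh (σ * x) ^ 2 ≤ 1 := by linarith [sq_nonneg (tanh (σ * x))]
  calc |poschlTeller σ k m x| ≤ |k| + |m| * |1 - tanh (σ * x) ^ 2| := by
        rw [poschlTeller, ← abs_mul]; exact abs_sub _ _
    _ ≤ |k| + |m| := by
        rw [abs_of_pos h0]; nlinarith [abs_nonneg m]

structure IsSolution_s14 (q u v : ℝ → ℝ) : Prop where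
  hasDerivAt_u : ∀ x, HasDerivAt u (v x) x
  hasDerivAt_v : ∀ x, HasDerivAt v (q x * u x) x

lemma convexOn_univ_of_hasDerivAt2 {f f' f'' : ℝ → ℝ} (hf : ∀ x, HasDerivAt f (f' x) x)
    (hf' : ∀ x, HasDerivAt f' (f'' x) x) (hf'' : ∀ x, 0 ≤ f'' x) : ConvexOn ℝ univ f :=
  convexOn_of_hasDerivWithinAt2_nonneg convex_univ
    (fun x _ => (hf x).continuousAt.continuousWithinAt)
    (fun x _ => (hf x).hasDerivWithinAt) (fun x _ => (hf' x).hasDerivWithinAt) fun x _ => hf'' x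

lemma ConvexOn.add_mul_sub_le_of_hasDerivAt {f : ℝ → ℝ} {f' x : ℝ} (hf : ConvexOn ℝ univ f)
    (hd : HasDerivAt f f' x) (y : ℝ) : f x + f' * (y - x) ≤ f y := by
  rcases lt_trichotomy x y with hxy | rfl | hyx
  · have := hf.le_slope_of_hasDerivAt (mem_univ x) (mem_univ y) hxy hd
    rw [slope_def_field, le_div_iff₀ (by linarith)] at this
    linarith
  · simp
  · have := hf.slope_le_of_hasDerivAt (mem_univ y) (mem_univ x) hyx hd
    rw [slope_def_field, div_le_iff₀ (by linarith)] at this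
    linarith

lemma ConvexOn.hasDerivAt_eq_zero_of_forall_le {f : ℝ → ℝ} {f' x C : ℝ} (hf : ConvexOn ℝ univ f)
    (hC : ∀ y, f y ≤ C) (hd : HasDerivAt f f' x) : f' = 0 := by
  by_contra hne
  have := hf.add_mul_sub_le_of_hasDerivAt hd (x + (C - f x + 1) / f')
  rw [add_sub_cancel_left, mul_div_cancel₀ _ hne] at this
  linarith [hC (x + (C - f x + 1) / f')]

lemma abs_le_two_mul_add_of_hasDerivAt2 {u v w : ℝ → ℝ} (hu : ∀ x, HasDerivAt u (v x) x)
    (hv : ∀ x, HasDerivAt v (w x) x) {B C : ℝ} (hB : ∀ x, |u x| ≤ B) (hC : ∀ x, |w x| ≤ C)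
    (x : ℝ) : |v x| ≤ 2 * B + C := by
  obtain ⟨ξ, hξ, hslope⟩ := exists_hasDerivAt_eq_slope u v (lt_add_one x)
    (HasDerivAt.continuousOn fun y _ => hu y) (fun y _ => hu y)
  have hvξ : |v ξ| ≤ 2 * B := by
    rw [hslope, add_sub_cancel_left, div_one]
    linarith [abs_sub (u (x + 1)) (u x), hB x, hB (x + 1)]
  have hvx : |v x - v ξ| ≤ C * |x - ξ| :=
    convex_univ.norm_image_sub_le_of_norm_hasDerivWithin_le (fun y _ => (hv y).hasDerivWithinAt)
      (fun y _ => hC y) (mem_univ ξ) (mem_univ x)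
  have hC0 : 0 ≤ C := (abs_nonneg _).trans (hC x)
  have hxξ : |x - ξ| ≤ 1 := by rw [abs_le]; constructor <;> linarith [hξ.1, hξ.2]
  nlinarith [abs_sub_abs_le_abs_sub (v x) (v ξ)]

lemma exists_mul_le_intervalIntegral {w : ℝ → ℝ} {a b : ℝ} (hab : a ≤ b)
    (hw : ContinuousOn w (Icc a b)) : ∃ t ∈ Icc a b, (b - a) * w t ≤ ∫ x in a..b, w x := by
  obtain ⟨t, ht, hmin⟩ := isCompact_Icc.exists_isMinOn (nonempty_Icc.mpr hab) hw
  refine ⟨t, ht, ?_⟩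
  have := intervalIntegral.integral_mono_on (μ := volume) hab intervalIntegrable_const
    (hw.intervalIntegrable_of_Icc hab) fun x hx => hmin hx
  simpa [intervalIntegral.integral_const] using this

lemma abs_intervalIntegral_le_integral {w : ℝ → ℝ} (hw : Integrable w) (hw0 : ∀ x, 0 ≤ w x)
    (a b : ℝ) : |∫ x in a..b, w x| ≤ ∫ x, w x := by
  calc |∫ x in a..b, w x| ≤ ∫ x in Ι a b, ‖w x‖ :=
        (Real.norm_eq_abs _).symm.trans_le intervalIntegral.norm_integral_le_integral_norm_uIoc
    _ = ∫ x in Ι a b, w x := by simp_rw [Real.norm_of_nonneg (hw0 _)]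
    _ ≤ ∫ x, w x := setIntegral_le_integral hw (Filter.Eventually.of_forall hw0)

lemma exists_second_antideriv_abs_le {w : ℝ → ℝ} (hw : Continuous w) {I : ℝ} (a : ℝ)
    (hI : ∀ t, |∫ x in a..t, w x| ≤ I) :
    ∃ G W : ℝ → ℝ, (∀ t, HasDerivAt G (W t) t) ∧ (∀ t, HasDerivAt W (w t) t) ∧
      ∀ t, |G t| ≤ I * |t - a| := by
  set W : ℝ → ℝ := fun t => ∫ x in a..t, w x
  have hW (t : ℝ) : HasDerivAt W (w t) t := (hw.integral_hasStrictDerivAt a t).hasDerivAt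
  have hWc : Continuous W := continuous_iff_continuousAt.mpr fun t => (hW t).continuousAt
  refine ⟨fun t => ∫ x in a..t, W x, W, fun t => (hWc.integral_hasStrictDerivAt a t).hasDerivAt,
    hW, fun t => ?_⟩
  simpa [abs_sub_comm] using intervalIntegral.norm_integral_le_of_norm_le_const
    (a := a) (b := t) fun x _ => (Real.norm_eq_abs _).trans_le (hI x)

namespace IsSolution_s14

variable {q u v : ℝ → ℝ}

lemma continuous_u (hs : IsSolution_s14 q u v) : Continuous u :=
  continuous_iff_continuousAt.mpr fun x => (hs.hasDerivAt_u x).continuousAt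

lemma eq_zero_of_pos_of_abs_le (hs : IsSolution_s14 q u v) (hq : ∀ x, 0 < q x) {B : ℝ}
    (hB : ∀ x, |u x| ≤ B) : u = 0 := by
  have hu2 (x : ℝ) : HasDerivAt (fun y => u y ^ 2) (2 * (u x * v x)) x :=
    ((hs.hasDerivAt_u x).pow 2).congr_deriv (by norm_num; ring)
  have huv (x : ℝ) : HasDerivAt (fun y => u y * v y) (v x ^ 2 + q x * u x ^ 2) x :=
    ((hs.hasDerivAt_u x).mul (hs.hasDerivAt_v x)).congr_deriv (by ring)
  have hconv : ConvexOn ℝ univ fun y => u y ^ 2 :=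
    convexOn_univ_of_hasDerivAt2 hu2 (fun x => (huv x).const_mul 2)
      fun x => by nlinarith [hq x, sq_nonneg (v x), sq_nonneg (u x)]
  -- `u²` is convex and bounded, hence constant, so `(u v)' = v² + q u²` vanishes
  have huv0 (x : ℝ) : u x * v x = 0 := by
    have := hconv.hasDerivAt_eq_zero_of_forall_le (C := B ^ 2)
      (fun y => sq_le_sq' (abs_le.mp (hB y)).1 (abs_le.mp (hB y)).2) (hu2 x)
    linarith
  funext x
  show u x = 0
  have h := (huv x).unique ((hasDerivAt_const x (0 : ℝ)).congr_of_eventuallyEq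
    (Filter.Eventually.of_forall huv0))
  have hqu : q x * u x ^ 2 = 0 := by
    nlinarith [sq_nonneg (v x), mul_nonneg (hq x).le (sq_nonneg (u x))]
  simpa [(hq x).ne'] using hqu

lemma sq_le_integral (hs : IsSolution_s14 q u v) {M : ℝ} (hq : ∀ x, |q x| ≤ M)
    (hint : Integrable fun x => u x ^ 2) (a : ℝ) : u a ^ 2 ≤ (1 + 2 * M) * ∫ x, u x ^ 2 := by
  set I := ∫ x, u x ^ 2
  have hM : 0 ≤ M := (abs_nonneg _).trans (hq 0)
  have hwc : Continuous fun x => u x ^ 2 := hs.continuous_u.pow 2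
  have hI := abs_intervalIntegral_le_integral hint (fun x => sq_nonneg (u x))
  obtain ⟨G, W, hG, hW, hGI⟩ := exists_second_antideriv_abs_le hwc a (hI a)
  -- `u² + 2 M G` is convex since `(u²)'' = 2 v² + 2 q u² ≥ -2 M u² = -2 M G''`
  have hconv : ConvexOn ℝ univ fun t => u t ^ 2 + 2 * M * G t := by
    refine convexOn_univ_of_hasDerivAt2 (f' := fun t => 2 * (u t * v t) + 2 * M * W t)
      (fun t => (((hs.hasDerivAt_u t).pow 2).add ((hG t).const_mul (2 * M))).congr_deriv
        (by norm_num; ring))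
      (fun t => (((hs.hasDerivAt_u t).mul (hs.hasDerivAt_v t)).const_mul 2).add
        ((hW t).const_mul (2 * M))) fun t => ?_
    have := neg_abs_le (q t)
    nlinarith [hq t, sq_nonneg (u t), sq_nonneg (v t)]
  have hbound (t : ℝ) (ht : |t - a| ≤ 1) (hut : u t ^ 2 ≤ I) :
      u t ^ 2 + 2 * M * G t ≤ (1 + 2 * M) * I := by
    have hGt := (hGI t).trans (mul_le_of_le_one_right ((abs_nonneg _).trans (hI a t)) ht)
    nlinarith [(abs_le.mp hGt).2]
  obtain ⟨tm, htm, hum⟩ := exists_mul_le_intervalIntegral (sub_one_lt a).le hwc.continuousOn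
  obtain ⟨tp, htp, hup⟩ := exists_mul_le_intervalIntegral (lt_add_one a).le hwc.continuousOn
  simp only [sub_sub_cancel, add_sub_cancel_left, one_mul] at hum hup
  have hseg : a ∈ segment ℝ tm tp := by
    rw [segment_eq_Icc (htm.2.trans htp.1)]; exact ⟨htm.2, htp.1⟩
  have hGa : G a = 0 := by simpa using hGI a
  calc u a ^ 2 = u a ^ 2 + 2 * M * G a := by rw [hGa, mul_zero, add_zero]
    _ ≤ max (u tm ^ 2 + 2 * M * G tm) (u tp ^ 2 + 2 * M * G tp) :=
        hconv.le_on_segment (mem_univ _) (mem_univ _) hseg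
    _ ≤ (1 + 2 * M) * I := max_le
        (hbound tm (by rw [abs_le]; constructor <;> linarith [htm.1, htm.2])
          (hum.trans ((le_abs_self _).trans (hI _ _))))
        (hbound tp (by rw [abs_le]; constructor <;> linarith [htp.1, htp.2])
          (hup.trans ((le_abs_self _).trans (hI _ _))))

variable {σ k : ℝ}

lemma darboux {a : ℝ} (hs : IsSolution_s14 (poschlTeller σ k (a * (a + σ))) u v) :
    ∃ h, IsSolution_s14 (poschlTeller σ k (a * (a - σ))) (fun x => v x + a * tanh (σ * x) * u x) h := by
  have hT := hasDerivAt_tanh_mul σ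
  refine ⟨fun x => (k - a ^ 2 * (1 - tanh (σ * x) ^ 2)) * u x + a * tanh (σ * x) * v x,
    fun x => ?_, fun x => ?_⟩
  · exact ((hs.hasDerivAt_v x).add (((hT x).const_mul a).mul (hs.hasDerivAt_u x))).congr_deriv
      (by simp only [poschlTeller]; ring)
  · have hP : HasDerivAt (fun y => k - a ^ 2 * (1 - tanh (σ * y) ^ 2))
        (a ^ 2 * (2 * tanh (σ * x) * (σ * (1 - tanh (σ * x) ^ 2)))) x :=
      ((((hT x).pow 2).const_sub 1).const_mul (a ^ 2)).const_sub k |>.congr_deriv (by ring)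
    exact ((hP.mul (hs.hasDerivAt_u x)).add (((hT x).const_mul a).mul
      (hs.hasDerivAt_v x))).congr_deriv (by simp only [poschlTeller]; ring)

lemma eq_zero_of_darboux_eq_zero {a : ℝ} (hs : IsSolution_s14 (poschlTeller σ k (a * (a + σ))) u v)
    (hk : k ≠ a ^ 2) (hg : ∀ x, v x + a * tanh (σ * x) * u x = 0) : u = 0 := by
  have hv : v = fun x => -(a * tanh (σ * x) * u x) :=
    funext fun x => eq_neg_of_add_eq_zero_left (hg x)
  funext x
  have h := (hs.hasDerivAt_v x).unique <| by
    rw [hv]; exact (((hasDerivAt_tanh_mul σ x).const_mul a).mul (hs.hasDerivAt_u x)).neg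
  rw [hv] at h
  have : (k - a ^ 2) * u x = 0 := by simp only [poschlTeller] at h; linear_combination h
  simpa [sub_ne_zero.mpr hk] using this

lemma exists_abs_darboux_le {m : ℝ} (hs : IsSolution_s14 (poschlTeller σ k m) u v) {B : ℝ}
    (hB : ∀ x, |u x| ≤ B) (a : ℝ) : ∃ B', ∀ x, |v x + a * tanh (σ * x) * u x| ≤ B' := by
  have hqu (x : ℝ) : |poschlTeller σ k m x * u x| ≤ (|k| + |m|) * B := by
    rw [abs_mul]; exact mul_le_mul (abs_poschlTeller_le σ k m x) (hB x) (abs_nonneg _)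
      (by positivity)
  refine ⟨2 * B + (|k| + |m|) * B + |a| * B, fun x => ?_⟩
  have hv := abs_le_two_mul_add_of_hasDerivAt2 hs.hasDerivAt_u hs.hasDerivAt_v hB hqu x
  have hTu : |a * tanh (σ * x) * u x| ≤ |a| * B := by
    calc |a * tanh (σ * x) * u x| = |a| * |tanh (σ * x)| * |u x| := by rw [abs_mul, abs_mul]
      _ ≤ |a| * 1 * B := by gcongr; exacts [(abs_tanh_lt_one _).le, hB x]
      _ = |a| * B := by ring
  exact (abs_add_le _ _).trans (add_le_add hv hTu)

lemma eq_zero_of_abs_le_of_eq_add_one (hσ : 1 < σ) (hk0 : 0 ≤ k) (hk1 : k < 1)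
    (hs : IsSolution_s14 (poschlTeller σ k (σ + 1)) u v) {B : ℝ} (hB : ∀ x, |u x| ≤ B) : u = 0 := by
  rw [show σ + 1 = 1 * (1 + σ) by ring] at hs
  obtain ⟨h, hg⟩ := hs.darboux
  obtain ⟨B', hB'⟩ := hs.exists_abs_darboux_le hB 1
  have hpos (x : ℝ) : 0 < poschlTeller σ k (1 * (1 - σ)) x := by
    have := tanh_sq_lt_one (σ * x)
    simp only [poschlTeller]; nlinarith
  exact hs.eq_zero_of_darboux_eq_zero (by rw [one_pow]; exact hk1.ne)
    (congrFun (hg.eq_zero_of_pos_of_abs_le hpos hB'))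

lemma eq_zero_of_abs_le (hσ : 1 < σ) (hk0 : 0 ≤ k) (hk1 : k < 1) {m : ℝ}
    (hm : m = σ + 1 ∨ m = (2 * σ + 1) * (σ + 1)) (hs : IsSolution_s14 (poschlTeller σ k m) u v)
    {B : ℝ} (hB : ∀ x, |u x| ≤ B) : u = 0 := by
  rcases hm with rfl | rfl
  · exact hs.eq_zero_of_abs_le_of_eq_add_one hσ hk0 hk1 hB
  rw [show (2 * σ + 1) * (σ + 1) = (σ + 1) * ((σ + 1) + σ) by ring] at hs
  obtain ⟨h, hg⟩ := hs.darboux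
  rw [show (σ + 1) * ((σ + 1) - σ) = σ + 1 by ring] at hg
  obtain ⟨B', hB'⟩ := hs.exists_abs_darboux_le hB (σ + 1)
  exact hs.eq_zero_of_darboux_eq_zero (by nlinarith)
    (congrFun (hg.eq_zero_of_abs_le_of_eq_add_one hσ hk0 hk1 hB'))

end IsSolution_s14

lemma isSolution_of_scalarL_eq {σ c E : ℝ} {f : ℝ → ℂ} (hf : ContDiff ℝ 2 f)
    (h : ∀ x, scalarL σ c f x = E * f x) (ℓ : ℂ →L[ℝ] ℝ) :
    IsSolution_s14 (poschlTeller σ (1 - E) c) (fun x => ℓ (f x)) (fun x => ℓ (deriv f x)) := by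
  have hf' : ContDiff ℝ 1 (deriv f) := (contDiff_succ_iff_deriv.mp hf).2.2
  have hf'' (x : ℝ) : deriv (deriv f) x = (poschlTeller σ (1 - E) c x : ℂ) * f x := by
    have hx := h x
    rw [scalarL, iteratedDeriv_succ, iteratedDeriv_one, div_eq_mul_one_div,
      ← one_sub_tanh_sq] at hx
    simp only [poschlTeller]; push_cast at hx ⊢
    linear_combination -hx
  refine ⟨fun x => ?_, fun x => ?_⟩
  · exact ℓ.hasFDerivAt.comp_hasDerivAt x ((hf.differentiable (by norm_num)) x).hasDerivAt
  · have := ℓ.hasFDerivAt.comp_hasDerivAt x ((hf'.differentiable (by norm_num)) x).hasDerivAt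
    rwa [hf'' x, ← Complex.real_smul, ℓ.map_smul, smul_eq_mul] at this

lemma exists_norm_le_of_memLp {σ c E : ℝ} {f : ℝ → ℂ} (hf : ContDiff ℝ 2 f)
    (h : ∀ x, scalarL σ c f x = E * f x) (hL2 : MemLp f 2 volume) : ∃ B, ∀ x, ‖f x‖ ≤ B := by
  have hsq (ℓ : ℂ →L[ℝ] ℝ) (x : ℝ) :
      ℓ (f x) ^ 2 ≤ (1 + 2 * (|1 - E| + |c|)) * ∫ y, ℓ (f y) ^ 2 :=
    (isSolution_of_scalarL_eq hf h ℓ).sq_le_integral (abs_poschlTeller_le σ _ c)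
      (ℓ.comp_memLp' hL2).integrable_sq x
  refine ⟨√((1 + 2 * (|1 - E| + |c|)) * ((∫ y, (f y).re ^ 2) + ∫ y, (f y).im ^ 2)), fun x => ?_⟩
  refine Real.le_sqrt_of_sq_le ?_
  rw [Complex.sq_norm, Complex.normSq_apply, mul_add]
  have hre := hsq Complex.reCLM x
  have him := hsq Complex.imCLM x
  simp only [Complex.reCLM_apply, Complex.imCLM_apply] at hre him
  nlinarith

lemma eq_zero_of_scalarL_eq {σ c E : ℝ} (hσ : 1 < σ)
    (hc : c = σ + 1 ∨ c = (2 * σ + 1) * (σ + 1)) (hE : 0 < E) (hE1 : E ≤ 1) {f : ℝ → ℂ}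
    (hf : ContDiff ℝ 2 f) (h : ∀ x, scalarL σ c f x = E * f x) {B : ℝ}
    (hB : ∀ x, ‖f x‖ ≤ B) : f = 0 := by
  have hℓ (ℓ : ℂ →L[ℝ] ℝ) (x : ℝ) : ℓ (f x) = 0 :=
    congrFun ((isSolution_of_scalarL_eq hf h ℓ).eq_zero_of_abs_le hσ (by linarith) (by linarith) hc
      fun y => (ℓ.le_opNorm (f y)).trans (mul_le_mul_of_nonneg_left (hB y) (norm_nonneg ℓ))) x
  funext x
  exact Complex.ext (hℓ Complex.reCLM x) (hℓ Complex.imCLM x)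

theorem stmt_14 (σ : ℝ) (hσ : 1 < σ) (c : ℝ)
    (hc : c = σ + 1 ∨ c = (2 * σ + 1) * (σ + 1)) :
    (∀ E : ℝ, 0 < E → E ≤ 1 →
      ∀ f : ℝ → ℂ, ContDiff ℝ 2 f → MemLp f 2 volume →
        (∀ x : ℝ, scalarL σ c f x = (E : ℂ) * f x) → f = 0) ∧
    (∀ f : ℝ → ℂ, ContDiff ℝ 2 f → (∃ B : ℝ, ∀ x : ℝ, ‖f x‖ ≤ B) →
      (∀ x : ℝ, scalarL σ c f x = f x) → f = 0) := by
  refine ⟨fun E hE hE1 f hf hL2 h => ?_, fun f hf ⟨B, hB⟩ h => ?_⟩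
  · obtain ⟨B, hB⟩ := exists_norm_le_of_memLp hf h hL2
    exact eq_zero_of_scalarL_eq hσ hc hE hE1 hf h hB
  · exact eq_zero_of_scalarL_eq hσ hc one_pos le_rfl hf (E := 1) (by simpa using h) hB
end
end
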